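/- arXiv:2502.09633 — 2 statements merged into one kernel-verified Lean document; each statement's English description precedes it below -/
import Mathlib

section
/- For every integer n ≥ 1, the identity 1 = (-1)^(n+1) · (4n+2) · ∑_{k=0}^{n} (2n)! / (n! · k! · (n-k)!) · B_{n+k+1}/(n+k+1) holds, where B_m denotes the m-th Bernoulli number. -/
/-!
Let `L : ℚ[X] → ℚ` be the linear functional `X ^ m ↦ B_m`, so that `L ((X + c) ^ m) = B_m(c)`.
Since `(2n)! / (n! k! (n-k)!) = (2n)! / n!² · C(n,k)`, the sum is `(2n)! / n!²` times `L P`, where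
`P = ∑ C(n,k) X^(n+k+1) / (n+k+1)` is the primitive of `(X (X + 1))ⁿ` vanishing at `0`.
The substitution `Y = 2X + 1` turns `4X (X + 1)` into `Y² - 1`, so `2·4ⁿ P = Q(2X + 1) - Q(1)` with
`Q` the odd primitive of `(Y² - 1)ⁿ`. Now `L (Q(2X + 1))` is a combination of the values `B_m(1/2)`
with `m` odd, which vanish by the reflection `B_m(1 - x) = (-1)^m B_m(x)`; hence
`L P = -Q(1) / (2·4ⁿ)`. Finally `Q(1) = ∑ (-1)^(n-j) C(n,j) / (2j + 1)` is half the `n`-th forward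
difference of `x ↦ 1/x` at `1/2`, which is `(-1)ⁿ 2ⁿ n! / (2n + 1)‼`.
-/

open scoped Nat

section

open Polynomial Finset

theorem fwdDiff_iter_inv {K : Type*} [Field K] (n : ℕ) {x : K} (hx : ∀ i ≤ n, x + i ≠ 0) :
    (fwdDiff 1)^[n] (·⁻¹) x = (-1) ^ n * n ! / ∏ i ∈ range (n + 1), (x + i) := by
  induction n generalizing x with
  | zero => simp
  | succ n ih =>
    have hx1 : ∀ i ≤ n, x + 1 + i ≠ 0 := fun i hi => by
      simpa [add_assoc, add_comm (1 : K)] using hx (i + 1) (by omega)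
    have hA : ∏ i ∈ range (n + 1), (x + 1 + i) ≠ 0 :=
      prod_ne_zero_iff.2 fun i hi => hx1 i (by rw [mem_range] at hi; omega)
    have hB : ∏ i ∈ range (n + 1), (x + i) ≠ 0 :=
      prod_ne_zero_iff.2 fun i hi => hx i (by rw [mem_range] at hi; omega)
    have hlast : x + (n + 1) ≠ 0 := by exact_mod_cast hx (n + 1) le_rfl
    have hshift : (∏ i ∈ range (n + 1), (x + 1 + i)) * x =
        (∏ i ∈ range (n + 1), (x + i)) * (x + (n + 1)) := by
      rw [← Nat.cast_add_one, ← prod_range_succ (fun i : ℕ => x + i), prod_range_succ' _ (n + 1)]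
      simp [add_assoc, add_comm (1 : K)]
    rw [Function.iterate_succ_apply', fwdDiff, ih hx1, ih fun i hi => hx i (by omega),
      prod_range_succ _ (n + 1), Nat.factorial_succ]
    push_cast
    rw [div_sub_div _ _ hA hB, div_eq_div_iff (mul_ne_zero hA hB) (mul_ne_zero hB hlast)]
    linear_combination -(-1 : K) ^ n * n ! * (∏ i ∈ range (n + 1), (x + i)) * hshift

theorem Nat.doubleFactorial_two_mul_add_one_eq_prod (n : ℕ) :
    (2 * n + 1)‼ = ∏ i ∈ range (n + 1), (2 * i + 1) := by
  rw [doubleFactorial_eq_prod_odd, prod_range_succ']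
  simp

theorem Polynomial.eq_of_derivative_eq {R : Type*} [Ring R] [IsAddTorsionFree R] {p q : R[X]}
    (hd : derivative p = derivative q) (h0 : p.eval 0 = q.eval 0) : p = q := by
  have h := eq_C_of_derivative_eq_zero (p := p - q) (by rw [derivative_sub, hd, sub_self])
  rwa [coeff_zero_eq_eval_zero, eval_sub, h0, sub_self, C_0, sub_eq_zero] at h

theorem Polynomial.bernoulli_eval_half_eq_zero_of_odd {m : ℕ} (hm : Odd m) :
    (bernoulli m).eval (1 / 2 : ℚ) = 0 := by
  have h := bernoulli_eval_one_sub m (1 / 2)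
  rw [hm.neg_one_pow] at h
  norm_num at h
  linarith

noncomputable def bernoulliFunctional : ℚ[X] →ₗ[ℚ] ℚ :=
  lsum fun m => LinearMap.toSpanSingleton ℚ ℚ (_root_.bernoulli m)

theorem bernoulliFunctional_C_mul_X_pow (a : ℚ) (m : ℕ) :
    bernoulliFunctional (C a * X ^ m) = a * _root_.bernoulli m := by
  rw [bernoulliFunctional, lsum_apply, C_mul_X_pow_eq_monomial, sum_monomial_index] <;> simp

theorem bernoulliFunctional_C (a : ℚ) : bernoulliFunctional (C a) = a := by
  simpa using bernoulliFunctional_C_mul_X_pow a 0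

theorem bernoulliFunctional_X_add_C_pow (c : ℚ) (m : ℕ) :
    bernoulliFunctional ((X + C c) ^ m) = (Polynomial.bernoulli m).eval c := by
  simp only [add_pow, map_sum, Polynomial.bernoulli, eval_finsetSum, eval_monomial]
  refine sum_congr rfl fun i _ => ?_
  rw [← C_pow, ← map_natCast C, mul_assoc, ← C_mul, mul_comm, bernoulliFunctional_C_mul_X_pow]
  ring

noncomputable def betaPrimitive (n : ℕ) : ℚ[X] :=
  ∑ k ∈ range (n + 1), C ((n.choose k : ℚ) / (n + k + 1)) * X ^ (n + k + 1)

noncomputable def wallisPrimitive (n : ℕ) : ℚ[X] :=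
  ∑ j ∈ range (n + 1), C ((-1 : ℚ) ^ (n - j) * n.choose j / (2 * j + 1)) * X ^ (2 * j + 1)

theorem derivative_betaPrimitive (n : ℕ) : derivative (betaPrimitive n) = (X * (X + 1)) ^ n := by
  rw [betaPrimitive, derivative_sum, mul_pow, add_pow, mul_sum]
  refine sum_congr rfl fun k _ => ?_
  rw [derivative_C_mul_X_pow, Nat.add_sub_cancel, one_pow, mul_one, pow_add, ← map_natCast C]
  push_cast
  rw [div_mul_cancel₀ _ (by positivity)]
  ring

theorem derivative_wallisPrimitive (n : ℕ) :
    derivative (wallisPrimitive n) = (X ^ 2 - 1) ^ n := by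
  rw [wallisPrimitive, derivative_sum, sub_eq_add_neg, add_pow]
  refine sum_congr rfl fun j _ => ?_
  rw [derivative_C_mul_X_pow, Nat.add_sub_cancel, ← pow_mul, ← map_natCast C, ← map_one C,
    ← map_neg C, ← C_pow]
  push_cast
  rw [div_mul_cancel₀ _ (by positivity), C_mul]
  ring

theorem smul_betaPrimitive_eq (n : ℕ) :
    (2 * 4 ^ n : ℚ) • betaPrimitive n =
      (wallisPrimitive n).comp (2 * X + 1) - C ((wallisPrimitive n).eval 1) := by
  apply eq_of_derivative_eq
  · have hlin : derivative (2 * X + 1 : ℚ[X]) = 2 := by simp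
    have hsq : (2 * X + 1 : ℚ[X]) ^ 2 - 1 = 4 * (X * (X + 1)) := by ring
    rw [derivative_smul, derivative_betaPrimitive, derivative_sub, derivative_C, sub_zero,
      derivative_comp, derivative_wallisPrimitive, hlin]
    simp only [smul_eq_C_mul, map_mul, map_pow, map_ofNat, sub_comp, pow_comp, X_comp, one_comp,
      hsq, mul_pow]
    ring
  · simp [betaPrimitive, eval_finsetSum]

theorem bernoulliFunctional_wallisPrimitive_comp (n : ℕ) :
    bernoulliFunctional ((wallisPrimitive n).comp (2 * X + 1)) = 0 := by
  rw [wallisPrimitive, Polynomial.sum_comp, map_sum]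
  refine sum_eq_zero fun j _ => ?_
  have h2 : (2 * X + 1 : ℚ[X]) = C 2 * (X + C (1 / 2)) := by
    rw [mul_add, ← C_mul, map_ofNat]; norm_num
  rw [mul_comp, C_comp, X_pow_comp, h2, mul_pow, ← C_pow, ← mul_assoc, ← C_mul, ← smul_eq_C_mul,
    map_smul, bernoulliFunctional_X_add_C_pow,
    Polynomial.bernoulli_eval_half_eq_zero_of_odd (odd_two_mul_add_one j), smul_zero]

theorem wallisPrimitive_eval_one (n : ℕ) :
    (wallisPrimitive n).eval 1 = (-1) ^ n * 2 ^ n * n ! / (2 * n + 1)‼ := by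
  have hsum : (wallisPrimitive n).eval 1 = 2⁻¹ * (fwdDiff (1 : ℚ))^[n] (·⁻¹) 2⁻¹ := by
    rw [fwdDiff_iter_eq_sum_shift, mul_sum, wallisPrimitive, eval_finsetSum]
    refine sum_congr rfl fun j _ => ?_
    simp only [eval_mul, eval_C, eval_pow, eval_X, one_pow, mul_one, zsmul_eq_mul, nsmul_eq_mul,
      Int.cast_mul, Int.cast_pow, Int.cast_neg, Int.cast_one, Int.cast_natCast]
    field_simp
    ring
  have hprod : ∏ i ∈ range (n + 1), ((2 : ℚ)⁻¹ + i) = (2 * n + 1)‼ / 2 ^ (n + 1) := by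
    rw [Nat.doubleFactorial_two_mul_add_one_eq_prod]
    have h2 : (2 : ℚ) ^ (n + 1) = ∏ _i ∈ range (n + 1), 2 := by simp
    push_cast
    rw [h2, ← prod_div_distrib]
    refine prod_congr rfl fun i _ => by ring
  rw [hsum, fwdDiff_iter_inv n fun i _ => by positivity, hprod]
  field_simp
  ring

theorem sum_choose_div_mul_bernoulli (n : ℕ) :
    ∑ k ∈ range (n + 1), (n.choose k : ℚ) / (n + k + 1) * _root_.bernoulli (n + k + 1) =
      -(wallisPrimitive n).eval 1 / (2 * 4 ^ n) := by
  have h := congrArg bernoulliFunctional (smul_betaPrimitive_eq n)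
  simp only [map_smul, map_sub, bernoulliFunctional_wallisPrimitive_comp, bernoulliFunctional_C,
    betaPrimitive, map_sum, bernoulliFunctional_C_mul_X_pow, smul_eq_mul, zero_sub] at h
  rw [eq_div_iff (by positivity), ← h]
  ring

end

theorem bernoulli_trinomial_identity_general (n : ℕ) :
    (1 : ℚ) = (-1 : ℚ)^(n+1) * (4*n+2) *
      ∑ k ∈ Finset.range (n+1),
        (((2*n).factorial : ℚ) / (n.factorial * k.factorial * (n-k).factorial))
          * (bernoulli (n+k+1) / (n+k+1)) := by
  have htrinomial : ∀ k ∈ Finset.range (n + 1),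
      ((2 * n)! : ℚ) / (n ! * k ! * (n - k)!) * (bernoulli (n + k + 1) / (n + k + 1)) =
        (2 * n)! / n ! ^ 2 * ((n.choose k : ℚ) / (n + k + 1) * bernoulli (n + k + 1)) := by
    intro k hk
    rw [Nat.cast_choose ℚ (Nat.lt_succ_iff.mp (Finset.mem_range.mp hk))]
    field_simp
  rw [Finset.sum_congr rfl htrinomial, ← Finset.mul_sum, sum_choose_div_mul_bernoulli,
    wallisPrimitive_eval_one]
  have hfact : (2 * n + 1 : ℚ) * (2 * n)! = (2 * n + 1)‼ * (2 ^ n * n !) := by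
    norm_cast
    rw [← Nat.factorial_succ, Nat.factorial_eq_mul_doubleFactorial, Nat.doubleFactorial_two_mul]
  have hsq : (-1 : ℚ) ^ n * (-1) ^ n = 1 := by rw [← mul_pow]; norm_num
  have h4 : (4 : ℚ) ^ n = 2 ^ n * 2 ^ n := by rw [← mul_pow]; norm_num
  rw [h4]
  field_simp
  linear_combination (-2 : ℚ) * hfact - (4 * n + 2) * (2 * n)! * hsq

theorem bernoulli_trinomial_identity (n : ℕ) (hn : 1 ≤ n) :
    (1 : ℚ) = (-1 : ℚ)^(n+1) * (4*n+2) *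
      ∑ k ∈ Finset.range (n+1),
        (((2*n).factorial : ℚ) / (n.factorial * k.factorial * (n-k).factorial))
          * (bernoulli (n+k+1) / (n+k+1)) :=
  bernoulli_trinomial_identity_general n
end

section
/- Define polynomials p_n(x) for n ≥ 2 by p_n(x) = (1/(4n²-1)) · ∑_{k=0}^{⌊n/2⌋-1} ((-4)^k x^{k+1}/(2k+1)!) · (Γ(n-1)Γ(2n-2-2k))/(Γ(n-1-2k)Γ(2n-2)), and set p_1(x) = 0. Then for all n ≥ 3, (2n+1)·p_n(x) = (2n-3)·p_{n-1}(x) - (x/(2n-1))·p_{n-2}(x). -/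
/-!
Writing `m = n - 2`, one has `p (m + 2) = S m / ((2m+3)(2m+5))` with
`S m = ∑ₖ (-4)ᵏ xᵏ⁺¹ / (2k+1)! · c m k` and `c m k = m^{(2k)} / (2m+1)^{(2k)}`
(falling factorials).
The recurrence becomes `S (m+2) = S (m+1) - x / ((2m+5)(2m+3)) · S m`, which holds term by term
after shifting `k` by one in the first two sums, because of the rational identity
`c (m+2) (k+1) - c (m+1) (k+1) = (2k+3)(k+1) / (2(2m+5)(2m+3)) · c m k`.
-/

/-- The polynomials `p_n(x)` in closed form:
`p_n(x) = (1/(4n²-1)) ∑_{k=0}^{⌊n/2⌋-1} ((-4)^k x^(k+1)/(2k+1)!) ·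
  Γ(n-1)Γ(2n-2-2k)/(Γ(n-1-2k)Γ(2n-2))`,
where the ratio `Γ(n-1)/Γ(n-1-2k)` is the falling factorial `(n-2)(n-3)⋯(n-1-2k)`
(which vanishes when `n-1-2k ≤ 0`), and similarly
`Γ(2n-2-2k)/Γ(2n-2) = 1/((2n-3)(2n-4)⋯(2n-2-2k))`.  Note `p_1(x) = 0` (empty sum). -/
noncomputable def p (n : ℕ) (x : ℝ) : ℝ :=
  (1 / (4*(n : ℝ)^2 - 1)) *
    ∑ k ∈ Finset.range (n / 2),
      ((-4 : ℝ)^k * x^(k+1) / ((2*k+1).factorial : ℝ)) *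
        ((Nat.descFactorial (n-2) (2*k) : ℝ) / (Nat.descFactorial (2*n-3) (2*k) : ℝ))

open Finset

namespace Nat

variable {R : Type*}

theorem cast_descFactorial_add_two [Ring R] (n k : ℕ) :
    (n.descFactorial (k + 2) : R) = n.descFactorial k * (n - k) * (n - k - 1) := by
  simp only [← descPochhammer_eval_eq_descFactorial, descPochhammer_succ_eval]
  push_cast; rw [sub_add_eq_sub_sub]

theorem cast_add_two_descFactorial_add_two [Semiring R] (n k : ℕ) :
    ((n + 2).descFactorial (k + 2) : R) = (n + 2) * (n + 1) * n.descFactorial k := by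
  rw [succ_descFactorial_succ, succ_descFactorial_succ]
  push_cast
  rw [mul_assoc, add_assoc, one_add_one_eq_two]

end Nat

noncomputable def pCoeff (m k : ℕ) : ℝ :=
  (m.descFactorial (2 * k) : ℝ) / ((2 * m + 1).descFactorial (2 * k) : ℝ)

theorem pCoeff_eq_zero {m k : ℕ} (h : m < 2 * k) : pCoeff m k = 0 := by
  simp [pCoeff, Nat.descFactorial_eq_zero_iff_lt.mpr h]

theorem pCoeff_zero_right (m : ℕ) : pCoeff m 0 = 1 := by
  simp [pCoeff]

theorem pCoeff_add_two_succ (m j : ℕ) :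
    pCoeff (m + 2) (j + 1) =
      pCoeff (m + 1) (j + 1) +
        (2 * j + 3) * (j + 1) / (2 * (2 * m + 5) * (2 * m + 3)) * pCoeff m j := by
  rcases lt_or_ge m (2 * j) with h | h
  · rw [pCoeff_eq_zero h, pCoeff_eq_zero (by omega), pCoeff_eq_zero (by omega)]; simp
  have hB : ((2 * m + 1).descFactorial (2 * j) : ℝ) ≠ 0 :=
    Nat.cast_ne_zero.mpr (Nat.descFactorial_pos.mpr (by omega)).ne'
  have hC : ((2 * m + 3).descFactorial (2 * j) : ℝ) ≠ 0 :=
    Nat.cast_ne_zero.mpr (Nat.descFactorial_pos.mpr (by omega)).ne'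
  -- two expansions of `(2m+3)(2m+2)⋯(2m+2-2j)`
  have hCB := (Nat.cast_descFactorial_add_two (R := ℝ) (2 * m + 3) (2 * j)).symm.trans
    (Nat.cast_add_two_descFactorial_add_two (2 * m + 1) (2 * j))
  have hA : ((m + 1).descFactorial (2 * j + 2) : ℝ) =
      (m + 1) * (m - 2 * j) * m.descFactorial (2 * j) := by
    rw [Nat.succ_descFactorial_succ, Nat.descFactorial_succ]; push_cast [Nat.cast_sub h]; ring
  simp only [pCoeff, show 2 * (j + 1) = 2 * j + 2 by ring,
    show 2 * (m + 2) + 1 = (2 * m + 3) + 2 by ring, show 2 * (m + 1) + 1 = (2 * m + 1) + 2 by ring,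
    Nat.cast_add_two_descFactorial_add_two, hA]
  push_cast at hCB ⊢
  field_simp
  linear_combination
    (-2 * (m + 2) * (m + 1) * (2 * m + 3) * (2 * m + 5) * (m.descFactorial (2 * j) : ℝ)) * hCB

noncomputable def pTerm (m k : ℕ) (x : ℝ) : ℝ :=
  (-4) ^ k * x ^ (k + 1) / (2 * k + 1).factorial * pCoeff m k

theorem pTerm_add_two_succ (m j : ℕ) (x : ℝ) :
    pTerm (m + 2) (j + 1) x =
      pTerm (m + 1) (j + 1) x - x / ((2 * m + 5) * (2 * m + 3)) * pTerm m j x := by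
  have hfact : ((2 * (j + 1) + 1).factorial : ℝ) =
      (2 * j + 3) * (2 * j + 2) * (2 * j + 1).factorial := by
    rw [show 2 * (j + 1) + 1 = 2 * j + 1 + 1 + 1 by ring, Nat.factorial_succ, Nat.factorial_succ]
    push_cast; ring
  rw [pTerm, pTerm, pTerm, pCoeff_add_two_succ, hfact]
  field_simp
  ring

theorem pTerm_zero (m : ℕ) (x : ℝ) : pTerm m 0 x = x := by
  simp [pTerm, pCoeff_zero_right]

noncomputable def pSum (m : ℕ) (x : ℝ) : ℝ :=
  ∑ k ∈ range (m / 2 + 1), pTerm m k x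

theorem pSum_eq_sum_range {m N : ℕ} (h : m / 2 < N) (x : ℝ) :
    pSum m x = ∑ k ∈ range N, pTerm m k x := by
  refine sum_subset (range_subset_range.mpr h) fun k _ hk => ?_
  rw [pTerm, pCoeff_eq_zero (by simp at hk; omega), mul_zero]

theorem pSum_add_two (m : ℕ) (x : ℝ) :
    pSum (m + 2) x = pSum (m + 1) x - x / ((2 * m + 5) * (2 * m + 3)) * pSum m x := by
  rw [pSum_eq_sum_range (N := m / 2 + 2) (by omega), pSum_eq_sum_range (N := m / 2 + 2) (by omega),
    pSum, sum_range_succ', sum_range_succ' _ (m / 2 + 1), pTerm_zero, pTerm_zero, mul_sum,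
    add_sub_right_comm, ← sum_sub_distrib]
  simp only [pTerm_add_two_succ]

theorem p_add_two_eq_pSum (m : ℕ) (x : ℝ) :
    p (m + 2) x = pSum m x / ((2 * m + 3) * (2 * m + 5)) := by
  rw [p, pSum, show (m + 2) / 2 = m / 2 + 1 by omega, show 2 * (m + 2) - 3 = 2 * m + 1 by omega,
    Nat.add_sub_cancel, one_div_mul_eq_div]
  congr 1
  push_cast
  ring

theorem p_recurrence (n : ℕ) (hn : 3 ≤ n) (x : ℝ) :
    (2*(n : ℝ)+1) * p n x = (2*(n : ℝ)-3) * p (n-1) x - (x / (2*(n : ℝ)-1)) * p (n-2) x := by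
  obtain rfl | ⟨m, rfl⟩ : n = 3 ∨ ∃ m, n = m + 4 := by
    rcases eq_or_lt_of_le hn with h | h
    · exact .inl h.symm
    · exact .inr ⟨n - 4, by omega⟩
  · -- `p 1 = 0` is not of the form `pSum m / ((2m+3)(2m+5))`
    norm_num [p]
    ring
  rw [show m + 4 - 1 = (m + 1) + 2 by omega, show m + 4 - 2 = m + 2 by omega,
    p_add_two_eq_pSum, p_add_two_eq_pSum, p_add_two_eq_pSum, pSum_add_two]
  push_cast
  rw [show 2 * ((m : ℝ) + 4) - 1 = 2 * m + 7 by ring]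
  field_simp
  ring
end
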